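/- Let X be a real normed space, D ⊆ X open, f : D → ℝ locally Lipschitz, and p ∈ D. Then the Clarke generalized directional derivative h ↦ f°(p,h) := limsup_{x→p, t→0⁺} (f(x+th) − f(x))/t is finite, positively homogeneous, and subadditive (hence sublinear) in h. -/

import Mathlib

/-!
Near `p` the function is `K`-Lipschitz, so every difference quotient in direction `h` is bounded
by `K‖h‖`. Positive homogeneity is the substitution `t ↦ c t`, which maps `𝓝[>] 0` onto itself.
For subadditivity, the quotient in direction `h₁ + h₂` at `(x, t)` splits as the quotient in
direction `h₂` at `(x + t h₁, t)` plus the one in direction `h₁` at `(x, t)`, and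
`(x + t h₁, t)` still tends to `(p, 0⁺)`.
-/

open Filter Topology Pointwise

variable {X : Type*} [NormedAddCommGroup X] [NormedSpace ℝ X]

/-- `f` is locally Lipschitz on `D`. -/
def LocallyLipschitzOnSet {Y : Type*} [NormedAddCommGroup Y] [NormedSpace ℝ Y]
    (D : Set X) (f : X → Y) : Prop :=
  ∀ p ∈ D, ∃ K : NNReal, ∃ U ∈ 𝓝 p, LipschitzOnWith K f U

/-- Clarke's generalized directional derivative of `f` at `p` in direction `h`. -/
noncomputable def clarkeDeriv (f : X → ℝ) (p h : X) : ℝ :=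
  limsup (fun q : X × ℝ => (f (q.1 + q.2 • h) - f q.1) / q.2)
    ((𝓝 p) ×ˢ (𝓝[>] (0 : ℝ)))

/-- Clarke's generalized gradient of `f` at `p`. -/
def clarkeGradient (f : X → ℝ) (p : X) : Set (X →L[ℝ] ℝ) :=
  {ζ | ∀ h : X, ζ h ≤ clarkeDeriv f p h}

noncomputable def clarkeQuotient (f : X → ℝ) (h : X) (q : X × ℝ) : ℝ :=
  (f (q.1 + q.2 • h) - f q.1) / q.2

lemma clarkeDeriv_eq_limsup (f : X → ℝ) (p h : X) :
    clarkeDeriv f p h = limsup (clarkeQuotient f h) (𝓝 p ×ˢ 𝓝[>] (0 : ℝ)) :=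
  rfl

lemma clarkeQuotient_smul (f : X → ℝ) (h : X) {c : ℝ} (hc : c ≠ 0) (q : X × ℝ) :
    clarkeQuotient f (c • h) q = c * clarkeQuotient f h (q.1, c * q.2) := by
  simp only [clarkeQuotient, smul_smul, mul_comm q.2 c]
  field_simp

lemma clarkeQuotient_add (f : X → ℝ) (h₁ h₂ : X) (q : X × ℝ) :
    clarkeQuotient f (h₁ + h₂) q =
      clarkeQuotient f h₂ (q.1 + q.2 • h₁, q.2) + clarkeQuotient f h₁ q := by
  simp only [clarkeQuotient, smul_add, ← add_div, ← add_assoc, sub_add_sub_cancel]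

lemma tendsto_add_smul_nhds (p h : X) :
    Tendsto (fun q : X × ℝ => q.1 + q.2 • h) (𝓝 p ×ˢ 𝓝[>] (0 : ℝ)) (𝓝 p) := by
  have hcont : Tendsto (fun q : X × ℝ => q.1 + q.2 • h) (𝓝 p ×ˢ 𝓝 0) (𝓝 (p + (0 : ℝ) • h)) := by
    rw [← nhds_prod_eq]
    exact (by fun_prop : Continuous fun q : X × ℝ => q.1 + q.2 • h).tendsto (p, 0)
  simpa using hcont.mono_left (prod_mono le_rfl nhdsWithin_le_nhds)

lemma LipschitzOnWith.eventually_abs_clarkeQuotient_le {f : X → ℝ} {K : NNReal} {U : Set X}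
    {p : X} (hf : LipschitzOnWith K f U) (hU : U ∈ 𝓝 p) (h : X) :
    ∀ᶠ q in 𝓝 p ×ˢ 𝓝[>] (0 : ℝ), |clarkeQuotient f h q| ≤ K * ‖h‖ := by
  filter_upwards [tendsto_fst.eventually hU, (tendsto_add_smul_nhds p h).eventually hU,
    tendsto_snd.eventually self_mem_nhdsWithin] with q hx hy (ht : 0 < q.2)
  have hlip := hf.dist_le_mul _ hy _ hx
  rw [Real.dist_eq, dist_eq_norm, add_sub_cancel_left, norm_smul, Real.norm_of_nonneg ht.le]
    at hlip
  rw [clarkeQuotient, abs_div, abs_of_pos ht, div_le_iff₀ ht]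
  linarith

/- No boundedness is needed: the eventual upper bounds of `c * u` are `c •` those of `u`, and
`Real.sInf_smul_of_nonneg` holds even for the junk values of `sInf`. -/
lemma Real.limsup_const_mul_of_pos {α : Type*} {l : Filter α} {u : α → ℝ} {c : ℝ} (hc : 0 < c) :
    limsup (fun x => c * u x) l = c * limsup u l := by
  have hscale : {a | ∀ᶠ x in l, c * u x ≤ a} = c • {a | ∀ᶠ x in l, u x ≤ a} := by
    ext a
    simp [Set.mem_smul_set_iff_inv_smul_mem₀ hc.ne', le_inv_mul_iff₀ hc]
  rw [limsup_eq, limsup_eq, hscale, Real.sInf_smul_of_nonneg hc.le, smul_eq_mul]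

lemma map_const_mul_nhdsGT_zero {c : ℝ} (hc : 0 < c) :
    map (c * ·) (𝓝[>] (0 : ℝ)) = 𝓝[>] 0 := by
  simpa [Set.image_const_mul_Ioi_zero hc] using
    (Homeomorph.mulLeft₀ c hc.ne').isEmbedding.map_nhdsWithin_eq (Set.Ioi 0) 0

lemma clarkeDeriv_smul_of_pos (f : X → ℝ) (p h : X) {c : ℝ} (hc : 0 < c) :
    clarkeDeriv f p (c • h) = c * clarkeDeriv f p h := by
  have hmap : map (Prod.map id (c * ·)) (𝓝 p ×ˢ 𝓝[>] (0 : ℝ)) = 𝓝 p ×ˢ 𝓝[>] 0 := by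
    rw [← prod_map_map_eq', map_id, map_const_mul_nhdsGT_zero hc]
  calc clarkeDeriv f p (c • h)
      = limsup ((fun q => c * clarkeQuotient f h q) ∘ Prod.map id (c * ·))
          (𝓝 p ×ˢ 𝓝[>] (0 : ℝ)) := by
        rw [clarkeDeriv_eq_limsup]
        congr 1
        funext q
        exact clarkeQuotient_smul f h hc.ne' q
    _ = c * clarkeDeriv f p h := by
        rw [limsup_comp, hmap, Real.limsup_const_mul_of_pos hc, clarkeDeriv_eq_limsup]

lemma clarkeDeriv_add_le {f : X → ℝ} {p h₁ h₂ : X}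
    (hb₁ : IsBoundedUnder (· ≤ ·) (𝓝 p ×ˢ 𝓝[>] (0 : ℝ)) (clarkeQuotient f h₁) ∧
      IsBoundedUnder (· ≥ ·) (𝓝 p ×ˢ 𝓝[>] (0 : ℝ)) (clarkeQuotient f h₁))
    (hb₂ : IsBoundedUnder (· ≤ ·) (𝓝 p ×ˢ 𝓝[>] (0 : ℝ)) (clarkeQuotient f h₂) ∧
      IsBoundedUnder (· ≥ ·) (𝓝 p ×ˢ 𝓝[>] (0 : ℝ)) (clarkeQuotient f h₂)) :
    clarkeDeriv f p (h₁ + h₂) ≤ clarkeDeriv f p h₁ + clarkeDeriv f p h₂ := by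
  set F := 𝓝 p ×ˢ 𝓝[>] (0 : ℝ)
  set ψ : X × ℝ → X × ℝ := fun q => (q.1 + q.2 • h₁, q.2)
  have hψ : Tendsto ψ F F := (tendsto_add_smul_nhds p h₁).prodMk tendsto_snd
  have hsplit : clarkeQuotient f (h₁ + h₂) = clarkeQuotient f h₂ ∘ ψ + clarkeQuotient f h₁ :=
    funext (clarkeQuotient_add f h₁ h₂)
  calc clarkeDeriv f p (h₁ + h₂)
      ≤ limsup (clarkeQuotient f h₂ ∘ ψ) F + limsup (clarkeQuotient f h₁) F := by
        rw [clarkeDeriv_eq_limsup, hsplit]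
        exact limsup_add_le (hψ.isBoundedUnder_comp hb₂.2) (hψ.isBoundedUnder_comp hb₂.1)
          hb₁.2.isCoboundedUnder_le hb₁.1
    _ ≤ limsup (clarkeQuotient f h₂) F + limsup (clarkeQuotient f h₁) F := by
        gcongr
        exact hψ.limsup_comp_le_limsup (hb₂.2.mono hψ).isCoboundedUnder_le hb₂.1
    _ = clarkeDeriv f p h₁ + clarkeDeriv f p h₂ := add_comm _ _

theorem clarkeDeriv_sublinear_general (D : Set X) (f : X → ℝ)
    (hf : LocallyLipschitzOnSet D f) (p : X) (hp : p ∈ D) :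
    (∀ h : X,
        IsBoundedUnder (· ≤ ·) ((𝓝 p) ×ˢ (𝓝[>] (0 : ℝ)))
          (fun q : X × ℝ => (f (q.1 + q.2 • h) - f q.1) / q.2) ∧
        IsBoundedUnder (· ≥ ·) ((𝓝 p) ×ˢ (𝓝[>] (0 : ℝ)))
          (fun q : X × ℝ => (f (q.1 + q.2 • h) - f q.1) / q.2)) ∧
    (∀ (c : ℝ), 0 < c → ∀ h : X, clarkeDeriv f p (c • h) = c * clarkeDeriv f p h) ∧
    (∀ h₁ h₂ : X, clarkeDeriv f p (h₁ + h₂) ≤ clarkeDeriv f p h₁ + clarkeDeriv f p h₂) := by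
  obtain ⟨K, U, hU, hLip⟩ := hf p hp
  have hbdd (h : X) :
      IsBoundedUnder (· ≤ ·) (𝓝 p ×ˢ 𝓝[>] (0 : ℝ)) (clarkeQuotient f h) ∧
        IsBoundedUnder (· ≥ ·) (𝓝 p ×ˢ 𝓝[>] (0 : ℝ)) (clarkeQuotient f h) :=
    isBoundedUnder_le_abs.mp
      (isBoundedUnder_of_eventually_le (hLip.eventually_abs_clarkeQuotient_le hU h))
  exact ⟨hbdd, fun c hc h => clarkeDeriv_smul_of_pos f p h hc,
    fun h₁ h₂ => clarkeDeriv_add_le (hbdd h₁) (hbdd h₂)⟩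

/-- The Clarke generalized directional derivative is finite, positively homogeneous
and subadditive in the direction. -/
theorem clarkeDeriv_sublinear (D : Set X) (hD : IsOpen D) (f : X → ℝ)
    (hf : LocallyLipschitzOnSet D f) (p : X) (hp : p ∈ D) :
    (∀ h : X,
        IsBoundedUnder (· ≤ ·) ((𝓝 p) ×ˢ (𝓝[>] (0 : ℝ)))
          (fun q : X × ℝ => (f (q.1 + q.2 • h) - f q.1) / q.2) ∧
        IsBoundedUnder (· ≥ ·) ((𝓝 p) ×ˢ (𝓝[>] (0 : ℝ)))
          (fun q : X × ℝ => (f (q.1 + q.2 • h) - f q.1) / q.2)) ∧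
    (∀ (c : ℝ), 0 < c → ∀ h : X, clarkeDeriv f p (c • h) = c * clarkeDeriv f p h) ∧
    (∀ h₁ h₂ : X, clarkeDeriv f p (h₁ + h₂) ≤ clarkeDeriv f p h₁ + clarkeDeriv f p h₂) :=
  clarkeDeriv_sublinear_general D f hf p hp
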